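/- arXiv:2304.14639 — 3 statements merged into one kernel-verified Lean document; each statement's English description precedes it below -/
import Mathlib

section
/- Let G be a finite group, x ∈ G, and g ∈ C_G(x) an element of odd order. Then the sets {y ∈ C_G(g) : y² = x} and {y ∈ C_G(g) : y² = x g} have the same cardinality. -/
theorem stmt_1 (G : Type*) [Group G] [Finite G] (x g : G)
    (hgx : g ∈ Subgroup.centralizer {x}) (hg : Odd (orderOf g)) :
    Nat.card {y : G // y ∈ Subgroup.centralizer {g} ∧ y ^ 2 = x} =
      Nat.card {y : G // y ∈ Subgroup.centralizer {g} ∧ y ^ 2 = x * g} := by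
  obtain ⟨m, hm⟩ := hg
  set s := g ^ (m + 1) with hs
  have hs2 : s ^ 2 = g := by
    rw [hs, ← pow_mul]
    have h2 : (m + 1) * 2 = orderOf g + 1 := by omega
    rw [h2, pow_succ, pow_orderOf_eq_one, one_mul]
  have hsmem : s ∈ Subgroup.centralizer {g} := by
    rw [Subgroup.mem_centralizer_singleton_iff]
    exact (Commute.pow_right (Commute.refl g) (m + 1)).symm.eq
  have hcomm : ∀ y : G, y ∈ Subgroup.centralizer {g} → Commute y s := by
    intro y hy
    have := Subgroup.mem_centralizer_singleton_iff.mp hy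
    exact Commute.pow_right (show Commute y g from this) (m + 1)
  apply Nat.card_congr
  refine ⟨fun y => ⟨y.1 * s, Subgroup.mul_mem _ y.2.1 hsmem, ?_⟩,
          fun y => ⟨y.1 * s⁻¹, Subgroup.mul_mem _ y.2.1 (Subgroup.inv_mem _ hsmem), ?_⟩,
          fun y => ?_, fun y => ?_⟩
  · rw [(hcomm y.1 y.2.1).mul_pow, y.2.2, hs2]
  · rw [((hcomm y.1 y.2.1).inv_right).mul_pow, y.2.2, inv_pow, hs2,
      mul_assoc, mul_inv_cancel, mul_one]
  · ext; simp [mul_assoc]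
  · ext; simp [mul_assoc]
end

section
/- Let E be a group of order 16 containing a subgroup D isomorphic to the quaternion group Q₈ and containing an element of order 8. Then E is isomorphic to the generalized quaternion group Q₁₆ of order 16 or to the semidihedral group SD₁₆ of order 16. -/
def SD16 : Type := PresentedGroup
  ({FreeGroup.of 0 ^ 8, FreeGroup.of 1 ^ 2,
    (FreeGroup.of 1)⁻¹ * FreeGroup.of 0 * FreeGroup.of 1 * (FreeGroup.of 0 ^ 3)⁻¹} :
    Set (FreeGroup (Fin 2)))

instance : Group SD16 := by unfold SD16; infer_instance

/-!
Let `a ∈ E` have order 8. The subgroups `⟨a⟩` and `D ≅ Q₈` both have index 2, and `a ∉ D` because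
`Q₈` has exponent 4, so some `b ∈ D` lies outside `⟨a⟩`. In `D`, the element `b` lies outside the
cyclic subgroup `⟨a²⟩` of order 4, and in `Q₈` this forces `b² = a⁴` and `b⁻¹ a² b = a⁻²`.
Since `⟨a⟩` is normal, `b⁻¹ a b = aᵏ` with `2k ≡ -2 (mod 8)`, i.e. `k = 3` or `k = 7`. For `k = 7`
the pair `(a, b)` satisfies the defining relations of `Q₁₆`, and for `k = 3` the pair `(a, ab)`
satisfies those of `SD₁₆`. The resulting homomorphism onto `E` is an isomorphism by counting, the
presented group `SD₁₆` having at most 16 elements by its normal form `aⁱ bʲ`.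
-/

section ZModPow

variable {G : Type*} [Group G] {x : G} {m : ℕ}

lemma pow_zmod_val_natCast (hx : x ^ m = 1) (k : ℕ) : x ^ (k : ZMod m).val = x ^ k := by
  rw [ZMod.val_natCast, ← pow_eq_pow_mod _ hx]

variable [NeZero m]

lemma pow_zmod_val_add (hx : x ^ m = 1) (i j : ZMod m) :
    x ^ (i + j).val = x ^ i.val * x ^ j.val := by
  rw [ZMod.val_add, ← pow_eq_pow_mod _ hx, pow_add]

lemma pow_zmod_val_neg (hx : x ^ m = 1) (i : ZMod m) : x ^ (-i).val = (x ^ i.val)⁻¹ :=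
  eq_inv_of_mul_eq_one_left <| by
    rw [← pow_zmod_val_add hx, neg_add_cancel, ZMod.val_zero, pow_zero]

end ZModPow

namespace QuaternionGroup

variable {n : ℕ} [NeZero n] {G : Type*} [Group G] {x y : G}

def lift (hx : x ^ (2 * n) = 1) (hy : y ^ 2 = x ^ n) (hxy : y⁻¹ * x * y = x⁻¹) :
    QuaternionGroup n →* G where
  toFun
    | a i => x ^ i.val
    | xa i => y * x ^ i.val
  map_one' := by
    show x ^ (0 : ZMod (2 * n)).val = 1
    rw [ZMod.val_zero, pow_zero]
  map_mul' := by
    have hpow (i : ZMod (2 * n)) : x ^ i.val * y = y * x ^ (-i).val := by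
      rw [pow_zmod_val_neg hx, ← inv_pow]
      refine (SemiconjBy.pow_right ?_ i.val).eq.symm
      rw [SemiconjBy, ← hxy]
      group
    rintro (i | i) (j | j)
    · simp only [a_mul_a, pow_zmod_val_add hx]
    · simp only [a_mul_xa]
      rw [← mul_assoc, hpow, mul_assoc, ← pow_zmod_val_add hx, neg_add_eq_sub]
    · simp only [xa_mul_a, pow_zmod_val_add hx, mul_assoc]
    · simp only [xa_mul_xa]
      calc x ^ ((n : ZMod (2 * n)) + j - i).val
          = x ^ n * (x ^ (-i).val * x ^ j.val) := by
            rw [← pow_zmod_val_natCast hx n, ← pow_zmod_val_add hx, ← pow_zmod_val_add hx]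
            ring_nf
        _ = y * (x ^ i.val * y) * x ^ j.val := by
            rw [hpow, ← hy]
            simp only [sq, mul_assoc]
        _ = y * x ^ i.val * (y * x ^ j.val) := by simp only [mul_assoc]

lemma lift_a_one (hx : x ^ (2 * n) = 1) (hy : y ^ 2 = x ^ n) (hxy : y⁻¹ * x * y = x⁻¹) :
    lift hx hy hxy (a 1) = x := by
  show x ^ (1 : ZMod (2 * n)).val = x
  rw [← Nat.cast_one, pow_zmod_val_natCast hx, pow_one]

lemma lift_xa_zero (hx : x ^ (2 * n) = 1) (hy : y ^ 2 = x ^ n) (hxy : y⁻¹ * x * y = x⁻¹) :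
    lift hx hy hxy (xa 0) = y := by
  show y * x ^ (0 : ZMod (2 * n)).val = y
  rw [ZMod.val_zero, pow_zero, mul_one]

theorem two_sq_eq_sq_and_conj_eq_inv {u v : QuaternionGroup 2} (hv : v ^ 2 ≠ 1)
    (hu : u ∉ Subgroup.zpowers v) : u ^ 2 = v ^ 2 ∧ u⁻¹ * v * u = v⁻¹ := by
  have key : ∀ u v : QuaternionGroup 2, v ^ 2 ≠ 1 → (∀ k : Fin 4, u ≠ v ^ (k : ℕ)) →
      u ^ 2 = v ^ 2 ∧ u⁻¹ * v * u = v⁻¹ := by decide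
  exact key u v hv fun k hk => hu (hk ▸ Subgroup.npow_mem_zpowers v k)

theorem two_map_sq_eq_sq_and_conj_eq_inv (f : QuaternionGroup 2 →* G) {u v : QuaternionGroup 2}
    (hv : f v ^ 2 ≠ 1) (hu : f u ∉ Subgroup.zpowers (f v)) :
    f u ^ 2 = f v ^ 2 ∧ (f u)⁻¹ * f v * f u = (f v)⁻¹ := by
  have hv' : v ^ 2 ≠ 1 := fun h => hv (by rw [← map_pow, h, map_one])
  have hu' : u ∉ Subgroup.zpowers v := fun ⟨k, hk⟩ => hu ⟨k, by rw [← hk, map_zpow]⟩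
  obtain ⟨h2, hconj⟩ := two_sq_eq_sq_and_conj_eq_inv hv' hu'
  exact ⟨by rw [← map_pow, h2, map_pow], by rw [← map_inv, ← map_mul, ← map_mul, hconj, map_inv]⟩

theorem two_map_pow_four (f : QuaternionGroup 2 →* G) (u : QuaternionGroup 2) : f u ^ 4 = 1 := by
  rw [← map_pow, ← map_one f]
  congr 1
  decide +revert

theorem nonempty_mulEquiv_of_card {E : Type*} [Group E] (hcard : Nat.card E = 4 * n) {x y : E}
    (hx : x ^ (2 * n) = 1) (hy : y ^ 2 = x ^ n) (hxy : y⁻¹ * x * y = x⁻¹)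
    (hgen : Subgroup.closure {x, y} = ⊤) : Nonempty (E ≃* QuaternionGroup n) := by
  have hsurj : Function.Surjective (lift hx hy hxy) := by
    rw [← MonoidHom.range_eq_top, eq_top_iff, ← hgen, Subgroup.closure_le]
    rintro _ (rfl | rfl)
    exacts [⟨a 1, lift_a_one hx hy hxy⟩, ⟨xa 0, lift_xa_zero hx hy hxy⟩]
  have hle : Nat.card (QuaternionGroup n) ≤ Nat.card E := by
    rw [hcard, Nat.card_eq_fintype_card, card]
  exact ⟨(MulEquiv.ofBijective _ (hsurj.bijective_of_nat_card_le hle)).symm⟩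

end QuaternionGroup

namespace SD16

def a : SD16 := PresentedGroup.of 0
def b : SD16 := PresentedGroup.of 1

lemma a_pow_eight : a ^ 8 = 1 := by
  have h : PresentedGroup.mk _ (FreeGroup.of 0 ^ 8) = (1 : SD16) :=
    PresentedGroup.one_of_mem (by simp)
  rwa [map_pow] at h

lemma b_sq : b ^ 2 = 1 := by
  have h : PresentedGroup.mk _ (FreeGroup.of 1 ^ 2) = (1 : SD16) :=
    PresentedGroup.one_of_mem (by simp)
  rwa [map_pow] at h

lemma inv_b_mul_a_mul_b : b⁻¹ * a * b = a ^ 3 := by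
  have h : PresentedGroup.mk _
      ((FreeGroup.of 1)⁻¹ * FreeGroup.of 0 * FreeGroup.of 1 * (FreeGroup.of 0 ^ 3)⁻¹) =
      (1 : SD16) :=
    PresentedGroup.one_of_mem (by simp)
  simp only [map_mul, map_inv, map_pow] at h
  exact mul_inv_eq_one.1 h

lemma b_mul_a : b * a = a ^ 3 * b := by
  have hb : b⁻¹ = b := inv_eq_of_mul_eq_one_right (by rw [← sq, b_sq])
  calc b * a = b⁻¹ * a * b * b⁻¹ := by nth_rw 1 [← hb]; group
    _ = a ^ 3 * b := by rw [inv_b_mul_a_mul_b, hb]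

lemma mem_submonoidClosure (x : SD16) : x ∈ Submonoid.closure {a, b} := by
  have hfin : ∀ y ∈ ({a, b} : Set SD16), IsOfFinOrder y := by
    rintro y (rfl | rfl)
    · exact isOfFinOrder_iff_pow_eq_one.2 ⟨8, by norm_num, a_pow_eight⟩
    · exact isOfFinOrder_iff_pow_eq_one.2 ⟨2, by norm_num, b_sq⟩
  rw [← Subgroup.closure_toSubmonoid_of_isOfFinOrder hfin]
  exact PresentedGroup.generated_by _ (Subgroup.closure {a, b}) (fun j => by
    fin_cases j
    · exact Subgroup.subset_closure (Set.mem_insert _ _)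
    · exact Subgroup.subset_closure (Set.mem_insert_of_mem _ rfl)) x

lemma exists_eq_pow_mul_pow (x : SD16) : ∃ i j : ℕ, x = a ^ i * b ^ j := by
  induction mem_submonoidClosure x using Submonoid.closure_induction_left with
  | one => exact ⟨0, 0, by simp⟩
  | mul_left y hy z _ ih =>
    obtain ⟨i, j, rfl⟩ := ih
    rcases hy with rfl | rfl
    · exact ⟨i + 1, j, by rw [pow_succ', mul_assoc]⟩
    · refine ⟨3 * i, j + 1, ?_⟩
      rw [← mul_assoc, (SemiconjBy.pow_right b_mul_a i).eq, pow_mul, pow_succ' b j, mul_assoc]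

lemma surjective_pow_mul_pow :
    Function.Surjective fun p : Fin 8 × Fin 2 => a ^ (p.1 : ℕ) * b ^ (p.2 : ℕ) := by
  intro x
  obtain ⟨i, j, rfl⟩ := exists_eq_pow_mul_pow x
  refine ⟨(⟨i % 8, Nat.mod_lt _ (by norm_num)⟩, ⟨j % 2, Nat.mod_lt _ (by norm_num)⟩), ?_⟩
  simp only [← pow_eq_pow_mod _ a_pow_eight, ← pow_eq_pow_mod _ b_sq]

instance : Finite SD16 := Finite.of_surjective _ surjective_pow_mul_pow

lemma natCard_le : Nat.card SD16 ≤ 16 := by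
  simpa using Nat.card_le_card_of_surjective _ surjective_pow_mul_pow

variable {G : Type*} [Group G] {x y : G}

def lift (hx : x ^ 8 = 1) (hy : y ^ 2 = 1) (hxy : y⁻¹ * x * y = x ^ 3) : SD16 →* G :=
  PresentedGroup.toGroup (f := ![x, y]) <| by
    rintro r (rfl | rfl | rfl)
    · simpa using hx
    · simpa using hy
    · simpa [mul_inv_eq_one] using hxy

lemma lift_a (hx : x ^ 8 = 1) (hy : y ^ 2 = 1) (hxy : y⁻¹ * x * y = x ^ 3) :
    lift hx hy hxy a = x :=
  PresentedGroup.toGroup.of _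

lemma lift_b (hx : x ^ 8 = 1) (hy : y ^ 2 = 1) (hxy : y⁻¹ * x * y = x ^ 3) :
    lift hx hy hxy b = y :=
  PresentedGroup.toGroup.of _

theorem nonempty_mulEquiv_of_card {E : Type*} [Group E] (hcard : Nat.card E = 16) {x y : E}
    (hx : x ^ 8 = 1) (hy : y ^ 2 = 1) (hxy : y⁻¹ * x * y = x ^ 3)
    (hgen : Subgroup.closure {x, y} = ⊤) : Nonempty (E ≃* SD16) := by
  have hsurj : Function.Surjective (lift hx hy hxy) := by
    rw [← MonoidHom.range_eq_top, eq_top_iff, ← hgen, Subgroup.closure_le]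
    rintro _ (rfl | rfl)
    exacts [⟨a, lift_a hx hy hxy⟩, ⟨b, lift_b hx hy hxy⟩]
  exact ⟨(MulEquiv.ofBijective _ (hsurj.bijective_of_nat_card_le (hcard ▸ natCard_le))).symm⟩

end SD16

section OrderSixteen

variable {G : Type*} [Group G]

theorem Subgroup.closure_pair_eq_top_of_index_zpowers_eq_two {x y : G}
    (hx : (zpowers x).index = 2) (hy : y ∉ zpowers x) : closure {x, y} = ⊤ := by
  have : (zpowers x).FiniteIndex := ⟨by rw [hx]; norm_num⟩
  have hlt : zpowers x < closure {x, y} :=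
    SetLike.lt_iff_le_and_exists.2 ⟨zpowers_le.2 (subset_closure (Set.mem_insert x _)),
      y, subset_closure (Set.mem_insert_of_mem x rfl), hy⟩
  have hdvd := index_dvd_of_le hlt.le
  have hpos := Nat.pos_of_dvd_of_pos hdvd (by omega)
  have hlt2 := index_strictAnti hlt
  exact index_eq_one.1 (by omega)

theorem conj_eq_pow_three_or_inv_of_orderOf_eq_eight {a b : G} (ha : orderOf a = 8)
    (hnorm : b⁻¹ * a * b ∈ Subgroup.zpowers a) (hconj : b⁻¹ * a ^ 2 * b = (a ^ 2)⁻¹) :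
    b⁻¹ * a * b = a ^ 3 ∨ b⁻¹ * a * b = a⁻¹ := by
  obtain ⟨m, hm⟩ := Subgroup.mem_zpowers_iff.1 hnorm
  have hsq : a ^ (m * 2) = a ^ (-2 : ℤ) := by
    calc a ^ (m * 2) = b⁻¹ * a ^ 2 * b := by
          rw [zpow_mul, hm, zpow_ofNat, sq, sq]; simp only [mul_assoc, mul_inv_cancel_left]
      _ = a ^ (-2 : ℤ) := by rw [hconj]; group
  rw [← hm, ← zpow_ofNat, ← zpow_neg_one, zpow_eq_zpow_iff_modEq, zpow_eq_zpow_iff_modEq, ha]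
  rw [zpow_eq_zpow_iff_modEq, ha] at hsq
  simp only [Int.ModEq] at hsq ⊢
  omega

theorem nonempty_mulEquiv_quaternionGroup_or_SD16 {E : Type*} [Group E] (hcard : Nat.card E = 16)
    {a b : E} (ha : orderOf a = 8) (hb : b ∉ Subgroup.zpowers a) (hb2 : b ^ 2 = a ^ 4)
    (hconj : b⁻¹ * a ^ 2 * b = (a ^ 2)⁻¹) :
    Nonempty (E ≃* QuaternionGroup 4) ∨ Nonempty (E ≃* SD16) := by
  have h8 : a ^ 8 = 1 := ha ▸ pow_orderOf_eq_one a
  have hA : (Subgroup.zpowers a).index = 2 := by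
    have := (Subgroup.zpowers a).index_mul_card
    rw [Nat.card_zpowers, ha, hcard] at this
    omega
  have hnorm : b⁻¹ * a * b ∈ Subgroup.zpowers a := by
    simpa using (Subgroup.normal_of_index_eq_two hA).conj_mem a (Subgroup.mem_zpowers a) b⁻¹
  rcases conj_eq_pow_three_or_inv_of_orderOf_eq_eight ha hnorm hconj with h3 | hinv
  · right
    refine SD16.nonempty_mulEquiv_of_card hcard (x := a) (y := a * b) h8 ?_ (by rw [← h3]; group)
      (Subgroup.closure_pair_eq_top_of_index_zpowers_eq_two hA fun h =>
        hb ((Subgroup.mul_mem_cancel_left _ (Subgroup.mem_zpowers a)).1 h))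
    calc (a * b) ^ 2 = a * b ^ 2 * (b⁻¹ * a * b) := by rw [sq, sq]; group
      _ = a ^ 8 := by rw [hb2, h3]; group
      _ = 1 := h8
  · left
    exact QuaternionGroup.nonempty_mulEquiv_of_card hcard h8 hb2 hinv
      (Subgroup.closure_pair_eq_top_of_index_zpowers_eq_two hA hb)

end OrderSixteen

theorem stmt_7 (E : Type*) [Group E] [Fintype E] (hcard : Fintype.card E = 16)
    (D : Subgroup E) (hD : Nonempty (D ≃* QuaternionGroup 2))
    (hord : ∃ e : E, orderOf e = 8) :
    Nonempty (E ≃* QuaternionGroup 4) ∨ Nonempty (E ≃* SD16) := by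
  obtain ⟨φ⟩ := hD
  obtain ⟨a, ha⟩ := hord
  have hE : Nat.card E = 16 := by rw [Nat.card_eq_fintype_card, hcard]
  have hDcard : Nat.card D = 8 := by
    rw [Nat.card_congr φ.toEquiv, Nat.card_eq_fintype_card, QuaternionGroup.card]
  have hDindex : D.index = 2 := by
    have := D.index_mul_card
    rw [hDcard, hE] at this
    omega
  let f : QuaternionGroup 2 →* E := D.subtype.comp φ.symm.toMonoidHom
  have hf : ∀ x ∈ D, ∃ u, f u = x := fun x hx => ⟨φ ⟨x, hx⟩, by simp [f]⟩
  have ha4 : a ^ 4 ≠ 1 := pow_ne_one_of_lt_orderOf (by norm_num) (by rw [ha]; norm_num)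
  have haD : a ∉ D := fun h => by
    obtain ⟨u, hu⟩ := hf a h
    exact ha4 (hu ▸ QuaternionGroup.two_map_pow_four f u)
  obtain ⟨b, hbD, hbA⟩ : ∃ b ∈ D, b ∉ Subgroup.zpowers a := by
    by_contra! hle
    exact haD (Subgroup.eq_of_le_of_card_ge hle (by rw [hDcard, Nat.card_zpowers, ha]) ▸
      Subgroup.mem_zpowers a)
  obtain ⟨u, rfl⟩ := hf b hbD
  obtain ⟨v, hv⟩ := hf _ (D.sq_mem_of_index_two hDindex a)
  have hb2A : f u ∉ Subgroup.zpowers (f v) := fun h =>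
    hbA (Subgroup.zpowers_le.2 (hv ▸ Subgroup.npow_mem_zpowers a 2) h)
  obtain ⟨hb2, hconj⟩ := QuaternionGroup.two_map_sq_eq_sq_and_conj_eq_inv f
    (by rwa [hv, ← pow_mul]) hb2A
  rw [hv, ← pow_mul] at hb2
  rw [hv] at hconj
  exact nonempty_mulEquiv_quaternionGroup_or_SD16 hE ha hbA hb2 hconj
end

section
/- Let G be a finite group and f : G → ℂ a function that vanishes on all elements of even order. Then ∑_{g∈G} f(g²) = ∑_{x ∈ G, x²=1} ∑_{h ∈ C_G(x), h of odd order} f(h²). -/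
/-!
Every `g` with `g²` of odd order factors uniquely as `g = x * h` with `x² = 1`, `h` of odd order
and `x`, `h` commuting: `h` is the square root of `g²` inside the cyclic group it generates,
`h = (g²) ^ ((n + 1) / 2)` where `n` is the (odd) order of `g²`. Since `f` vanishes on the `g` with
`g²` of even order, the left-hand side is a sum over such `g`, and reindexing by the pairs `(x, h)`
turns `f (g²) = f ((x * h)²)` into `f (h²)`.
-/

open Finset

namespace Group

variable {G : Type*} [Group G]

noncomputable def oddSqrt (y : G) : G := y ^ ((orderOf y + 1) / 2)

lemma oddSqrt_sq {y : G} (hy : Odd (orderOf y)) : oddSqrt y ^ 2 = y := by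
  rw [oddSqrt, ← pow_mul, Nat.div_mul_cancel hy.add_one.two_dvd, pow_succ, pow_orderOf_eq_one,
    one_mul]

lemma orderOf_sq_of_odd {h : G} (hh : Odd (orderOf h)) : orderOf (h ^ 2) = orderOf h :=
  (Nat.coprime_two_right.mpr hh).orderOf_pow

lemma oddSqrt_sq_of_odd {h : G} (hh : Odd (orderOf h)) : oddSqrt (h ^ 2) = h := by
  rw [oddSqrt, orderOf_sq_of_odd hh, ← pow_mul, mul_comm 2,
    Nat.div_mul_cancel hh.add_one.two_dvd, pow_succ, pow_orderOf_eq_one, one_mul]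

lemma odd_orderOf_oddSqrt {y : G} (hy : Odd (orderOf y)) : Odd (orderOf (oddSqrt y)) :=
  hy.of_dvd_nat (orderOf_pow_dvd _)

lemma commute_oddSqrt_sq (g : G) : Commute g (oddSqrt (g ^ 2)) :=
  ((Commute.refl g).pow_right 2).pow_right _

lemma sq_mul_of_sq_eq_one {x h : G} (hx : x ^ 2 = 1) (hxh : Commute x h) :
    (x * h) ^ 2 = h ^ 2 := by
  rw [hxh.mul_pow, hx, one_mul]

variable [Fintype G] [DecidableEq G]

theorem sum_odd_orderOf_sq_eq_sum_involution_mul {M : Type*} [AddCommMonoid M] (F : G → M) :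
    ∑ g ∈ univ.filter (fun g : G => Odd (orderOf (g ^ 2))), F g =
      ∑ x ∈ univ.filter (fun x : G => x ^ 2 = 1),
        ∑ h ∈ univ.filter (fun h : G => h * x = x * h ∧ Odd (orderOf h)), F (x * h) := by
  rw [sum_sigma' _ _ (fun x h => F (x * h))]
  refine sum_bij' (fun g _ => ⟨g * (oddSqrt (g ^ 2))⁻¹, oddSqrt (g ^ 2)⟩)
    (fun p _ => p.1 * p.2) ?_ ?_ ?_ ?_ ?_
  · intro g hg
    have hg2 : Odd (orderOf (g ^ 2)) := (mem_filter.mp hg).2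
    have hcomm := commute_oddSqrt_sq g
    simp only [mem_sigma, mem_filter, mem_univ, true_and]
    refine ⟨?_, ?_, odd_orderOf_oddSqrt hg2⟩
    · rw [hcomm.inv_right.mul_pow, inv_pow, oddSqrt_sq hg2, mul_inv_cancel]
    · exact (hcomm.symm.mul_right (Commute.refl _).inv_right).eq
  · rintro ⟨x, h⟩ hp
    simp only [mem_sigma, mem_filter, mem_univ, true_and] at hp ⊢
    obtain ⟨hx, hxh, hh⟩ := hp
    rwa [sq_mul_of_sq_eq_one hx hxh.symm, orderOf_sq_of_odd hh]
  · intro g _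
    exact inv_mul_cancel_right g _
  · rintro ⟨x, h⟩ hp
    simp only [mem_sigma, mem_filter, mem_univ, true_and] at hp
    obtain ⟨hx, hxh, hh⟩ := hp
    have hsqrt : oddSqrt ((x * h) ^ 2) = h := by
      rw [sq_mul_of_sq_eq_one hx hxh.symm, oddSqrt_sq_of_odd hh]
    simp only [hsqrt, mul_inv_cancel_right]
  · intro g _
    rw [inv_mul_cancel_right]

end Group

open Group in
theorem stmt_18 (G : Type*) [Group G] [Fintype G] [DecidableEq G] (f : G → ℂ)
    (hf : ∀ g : G, Even (orderOf g) → f g = 0) :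
    ∑ g : G, f (g ^ 2) =
      ∑ x ∈ Finset.univ.filter (fun x : G => x ^ 2 = 1),
        ∑ h ∈ Finset.univ.filter (fun h : G => h * x = x * h ∧ Odd (orderOf h)),
          f (h ^ 2) := by
  have hsupport : ∀ g ∈ (univ : Finset G), f (g ^ 2) ≠ 0 → Odd (orderOf (g ^ 2)) :=
    fun g _ hne => Nat.not_even_iff_odd.mp fun heven => hne (hf _ heven)
  rw [← sum_filter_of_ne hsupport, sum_odd_orderOf_sq_eq_sum_involution_mul]
  refine sum_congr rfl fun x hx => sum_congr rfl fun h hh => ?_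
  rw [sq_mul_of_sq_eq_one (mem_filter.mp hx).2 (mem_filter.mp hh).2.1.symm]
end
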